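/- Let C be a preadditive category, J a category, F, G : J ⥤ CochainComplex(C, ℤ) functors. Suppose that for each object X of J we are given a chain map Ψ_X : G(X) ⟶ F(X), and for each morphism u : X ⟶ Y a degree −1 cochain Ψ¹(u) from G(X) to F(Y) with δΨ¹(u) = (cochain of Ψ_X ≫ F(u)) − (cochain of G(u) ≫ Ψ_Y). Then for any composable morphisms u₁ : X₀ ⟶ X₁ and u₂ : X₁ ⟶ X₂ in J, the degree −1 cochain λ² := ((cochain of G(u₁)) composed with Ψ¹(u₂)) + (Ψ¹(u₁) composed with (cochain of F(u₂))) − Ψ¹(u₁ ≫ u₂) from G(X₀) to F(X₂) satisfies δλ² = 0. -/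

import Mathlib

open CategoryTheory CochainComplex.HomComplex

/-!
A cochain `z` with `δ z = ofHom g - ofHom h` is a homotopy between `g` and `h`, and whiskering it
by chain maps on either side gives a homotopy between the whiskered maps, since chain maps are
cocycles and `δ` is a derivation. Applied to the three terms of `λ²` this computes
`δ λ² = (a - b) + (c - a) - (c - b) = 0`, where `a = G(u₁) ≫ Ψ ≫ F(u₂)`,
`b = G(u₁ ≫ u₂) ≫ Ψ` and `c = Ψ ≫ F(u₁ ≫ u₂)`.
-/

namespace CochainComplex.HomComplex

variable {C : Type*} [Category C] [Preadditive C] {K L M : CochainComplex C ℤ} {n : ℤ}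

lemma δ_ofHom_comp_eq_of_δ_eq (f : K ⟶ L) {z : Cochain L M n} {g h : L ⟶ M}
    (hz : δ n 0 z = Cochain.ofHom g - Cochain.ofHom h) :
    δ n 0 ((Cochain.ofHom f).comp z (zero_add n)) =
      Cochain.ofHom (f ≫ g) - Cochain.ofHom (f ≫ h) := by
  rw [δ_ofHom_comp, hz, Cochain.comp_sub, Cochain.ofHom_comp, Cochain.ofHom_comp]

lemma δ_comp_ofHom_eq_of_δ_eq {z : Cochain K L n} {g h : K ⟶ L} (f : L ⟶ M)
    (hz : δ n 0 z = Cochain.ofHom g - Cochain.ofHom h) :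
    δ n 0 (z.comp (Cochain.ofHom f) (add_zero n)) =
      Cochain.ofHom (g ≫ f) - Cochain.ofHom (h ≫ f) := by
  rw [δ_comp_ofHom, hz, Cochain.sub_comp, Cochain.ofHom_comp, Cochain.ofHom_comp]

end CochainComplex.HomComplex

/-- The second-level (m = 2) instance of the lemma `dλ^m = 0`: the obstruction
cocycle `λ² = G(u₁) ∘ Ψ¹(u₂) + Ψ¹(u₁) ∘ F(u₂) - Ψ¹(u₁ ≫ u₂)` is closed. -/
theorem stmt_3 {C : Type*} [Category C] [Preadditive C]
    {J : Type*} [Category J]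
    (F G : J ⥤ CochainComplex C ℤ)
    (Ψ : ∀ X : J, G.obj X ⟶ F.obj X)
    (Ψ₁ : ∀ (X Y : J), (X ⟶ Y) → Cochain (G.obj X) (F.obj Y) (-1))
    (hΨ₁ : ∀ (X Y : J) (u : X ⟶ Y), δ (-1) 0 (Ψ₁ X Y u) =
      Cochain.ofHom (Ψ X ≫ F.map u) - Cochain.ofHom (G.map u ≫ Ψ Y))
    {X₀ X₁ X₂ : J} (u₁ : X₀ ⟶ X₁) (u₂ : X₁ ⟶ X₂) :
    δ (-1) 0 ((Cochain.ofHom (G.map u₁)).comp (Ψ₁ X₁ X₂ u₂) (by omega) +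
        (Ψ₁ X₀ X₁ u₁).comp (Cochain.ofHom (F.map u₂)) (by omega) -
        Ψ₁ X₀ X₂ (u₁ ≫ u₂)) = 0 := by
  rw [δ_sub, δ_add, δ_ofHom_comp_eq_of_δ_eq _ (hΨ₁ X₁ X₂ u₂),
    δ_comp_ofHom_eq_of_δ_eq _ (hΨ₁ X₀ X₁ u₁), hΨ₁, F.map_comp, G.map_comp]
  simp only [Category.assoc]
  abel
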